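/- Let Ω ⊆ ℝⁿ be a nonempty closed convex set, F : ℝⁿ → ℝⁿ continuous and monotone on Ω, and let φ : ℝⁿ → ℝ ∪ {+∞} be convex with effective domain Ω and continuous on Ω, satisfying 0 ∈ ri(dom ∂φ − Ω). Then for every ε > 0, S₀ ∩ S_ε ⊆ S_φ. -/

import Mathlib

/-!
For two solutions `x, z` of the variational inequality, monotonicity of `F` squeezes
`⟪F x, z - x⟫` between `0` and `⟪F z, z - x⟫ ≤ 0`, so `F x ⊥ z - x`. The `ε`-regularized
inequality at `x` tested against `z` then reduces to `0 ≤ ε ⟪v, z - x⟫`.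
-/

open Set Pointwise
open scoped InnerProductSpace

/-- The (convex) subdifferential of φ (viewed as the extended function equal to φ on
Ω and +∞ outside of Ω, so that its effective domain is Ω). -/
def subdiffOn {n : ℕ} (Ω : Set (EuclideanSpace ℝ (Fin n)))
    (φ : EuclideanSpace ℝ (Fin n) → ℝ) (x : EuclideanSpace ℝ (Fin n)) :
    Set (EuclideanSpace ℝ (Fin n)) :=
  {v | x ∈ Ω ∧ ∀ y ∈ Ω, φ x + ⟪v, y - x⟫_ℝ ≤ φ y}

section VariationalInequality

variable {E : Type*} [NormedAddCommGroup E] [InnerProductSpace ℝ E]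

def IsVISolution (Ω : Set E) (F : E → E) (x : E) : Prop :=
  x ∈ Ω ∧ ∀ y ∈ Ω, 0 ≤ ⟪F x, y - x⟫_ℝ

theorem IsVISolution.inner_sub_eq_zero {Ω : Set E} {F : E → E}
    (hF : ∀ x ∈ Ω, ∀ y ∈ Ω, 0 ≤ ⟪F x - F y, x - y⟫_ℝ) {x z : E}
    (hx : IsVISolution Ω F x) (hz : IsVISolution Ω F z) :
    ⟪F x, z - x⟫_ℝ = 0 := by
  have hxz := hx.2 z hz.1
  have hzx := hz.2 x hx.1
  have hmono := hF x hx.1 z hz.1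
  rw [← neg_sub z x, inner_neg_right] at hzx
  rw [← neg_sub z x, inner_neg_right, inner_sub_left] at hmono
  linarith

theorem inner_nonneg_of_inner_add_smul_nonneg {a v w : E} {ε : ℝ} (hε : 0 < ε)
    (ha : ⟪a, w⟫_ℝ = 0) (h : 0 ≤ ⟪a + ε • v, w⟫_ℝ) : 0 ≤ ⟪v, w⟫_ℝ := by
  rw [inner_add_left, ha, zero_add, real_inner_smul_left] at h
  exact nonneg_of_mul_nonneg_right h hε

end VariationalInequality

theorem S0_inter_Seps_subset_Sphi {n : ℕ}
    (Ω : Set (EuclideanSpace ℝ (Fin n)))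
    (F : EuclideanSpace ℝ (Fin n) → EuclideanSpace ℝ (Fin n))
    (hFmono : ∀ x ∈ Ω, ∀ y ∈ Ω, 0 ≤ ⟪F x - F y, x - y⟫_ℝ)
    (φ : EuclideanSpace ℝ (Fin n) → ℝ) :
    ∀ ε : ℝ, 0 < ε →
      ({x | x ∈ Ω ∧ ∀ y ∈ Ω, 0 ≤ ⟪F x, y - x⟫_ℝ} ∩
        {x | x ∈ Ω ∧ ∃ v ∈ subdiffOn Ω φ x, ∀ z ∈ Ω, 0 ≤ ⟪F x + ε • v, z - x⟫_ℝ}) ⊆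
      {x | (x ∈ Ω ∧ ∀ y ∈ Ω, 0 ≤ ⟪F x, y - x⟫_ℝ) ∧
        ∃ v ∈ subdiffOn Ω φ x,
          ∀ z, (z ∈ Ω ∧ ∀ y ∈ Ω, 0 ≤ ⟪F z, y - z⟫_ℝ) → 0 ≤ ⟪v, z - x⟫_ℝ} := by
  rintro ε hε x ⟨hx, -, v, hv, hvε⟩
  refine ⟨hx, v, hv, fun z hz => ?_⟩
  exact inner_nonneg_of_inner_add_smul_nonneg hε
    (IsVISolution.inner_sub_eq_zero hFmono hx hz) (hvε z hz.1)
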